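/- Let L ≥ 1 be an integer, η ∈ ℂ, let x₁,…,x_L and z₁,…,z_L be complex numbers with sinh(x_i − z_ℓ) ≠ 0 and sinh(x_i − z_k − η) ≠ 0 for all i, k, ℓ, and let f : ℂ → ℂ be any function. Define E(u) = ∏_{ℓ=1}^L sinh(u − z_ℓ − η)/sinh(u − z_ℓ). Then det_{1≤i,j≤L} [ e^{(2j−L−1)x_i}/2^{j−1} − f(x_i)·e^{(2j−L−1)(x_i−η)}/2^{j−1} ] · ∏_{1≤i<j≤L} sinh(z_i − z_j) = ∏_{i,ℓ=1}^L sinh(x_i − z_ℓ) · det_{1≤i,k≤L} [ 1/sinh(x_i − z_k) − f(x_i)·E(x_i)/sinh(x_i − z_k − η) ]. -/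

import Mathlib

/-!
After multiplying row `i` of the Izergin-type matrix by `∏ₗ sinh (xᵢ - zₗ)`, the right-hand side
becomes `det B` with `B i k = N k (x i) - f (x i) * N k (x i - η)`, where
`N k u = ∏_{l ≠ k} sinh (u - z l)`. Since `e^{(L-1)u} N k u` is a polynomial of degree `< L` in
`e^{2u}`, each `N k` is a combination `∑ⱼ C j k * e^{(2j+1-L)u} / 2^j` of the functions appearing
on the left, so `B = A * C` with `A` the Vandermonde-type matrix of the left-hand side.

It remains to compute `det C`. Evaluating the expansion at `u = z m` gives
`V(z) * C = diagonal (fun k => N k (z k))`, where `V(y)` is a rescaled Vandermonde matrix in the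
`e^{2 y m}` with determinant `∏_{i<j} sinh (y j - y i)`; cancelling `det V(z)` yields
`det C = ∏_{i<j} sinh (z i - z j)`. If some `sinh (z i - z j)` vanishes, `N i` is a multiple of
`N j`, and then `det C = 0`, as seen at the integer points `y m = m`, where `V(y)` is invertible.
-/

open Complex Finset Polynomial

section

variable {L : ℕ}

noncomputable def expBasis (L : ℕ) (j : Fin L) (u : ℂ) : ℂ :=
  exp ((2 * ((j : ℕ) : ℂ) + 1 - (L : ℂ)) * u) / 2 ^ (j : ℕ)

noncomputable def expBasisMatrix (y : Fin L → ℂ) : Matrix (Fin L) (Fin L) ℂ :=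
  Matrix.of fun i j => expBasis L j (y i)

noncomputable def sinhProdErase (z : Fin L → ℂ) (k : Fin L) (u : ℂ) : ℂ :=
  ∏ l ∈ univ.erase k, sinh (u - z l)

noncomputable def sinhProdPoly (z : Fin L → ℂ) (k : Fin L) : ℂ[X] :=
  ∏ l ∈ univ.erase k, (C (exp (-z l) / 2) * X + C (-exp (z l) / 2))

noncomputable def sinhCoeffMatrix (z : Fin L → ℂ) : Matrix (Fin L) (Fin L) ℂ :=
  Matrix.of fun j k => 2 ^ (j : ℕ) * (sinhProdPoly z k).coeff j

lemma sinh_sub_eq_exp_neg_mul_eval (u w : ℂ) :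
    sinh (u - w) = exp (-u) * (C (exp (-w) / 2) * X + C (-exp w / 2)).eval (exp (2 * u)) := by
  have h1 : exp (-u) * exp (2 * u) * exp (-w) = exp (u - w) := by
    rw [← exp_add, ← exp_add]; ring_nf
  have h2 : exp (-u) * exp w = exp (-(u - w)) := by
    rw [← exp_add]; ring_nf
  simp only [eval_add, eval_mul, eval_C, eval_X, sinh]
  linear_combination (h2 - h1) / 2

lemma natDegree_sinhProdPoly_lt (z : Fin L → ℂ) (k : Fin L) :
    (sinhProdPoly z k).natDegree < L := by
  have hdeg : ∀ l, (C (exp (-z l) / 2) * X + C (-exp (z l) / 2)).natDegree ≤ 1 :=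
    fun _ => natDegree_linear_le
  calc (sinhProdPoly z k).natDegree ≤ ∑ _l ∈ univ.erase k, 1 :=
        (natDegree_prod_le _ _).trans (sum_le_sum fun l _ => hdeg l)
    _ < L := by simp [k.pos]

lemma sinhProdErase_eq_exp_pow_mul_eval (z : Fin L → ℂ) (k : Fin L) (u : ℂ) :
    sinhProdErase z k u = exp (-u) ^ (L - 1) * (sinhProdPoly z k).eval (exp (2 * u)) := by
  simp only [sinhProdErase, sinhProdPoly, sinh_sub_eq_exp_neg_mul_eval, prod_mul_distrib,
    eval_prod, prod_const, card_erase_of_mem (mem_univ k), card_univ, Fintype.card_fin]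

lemma sinhProdErase_eq_sum_expBasis (z : Fin L → ℂ) (k : Fin L) (u : ℂ) :
    sinhProdErase z k u = ∑ j, expBasis L j u * sinhCoeffMatrix z j k := by
  rw [sinhProdErase_eq_exp_pow_mul_eval, eval_eq_sum_range' (natDegree_sinhProdPoly_lt z k),
    mul_sum, ← Fin.sum_univ_eq_sum_range]
  refine sum_congr rfl fun j _ => ?_
  have hexp : exp ((2 * ((j : ℕ) : ℂ) + 1 - (L : ℂ)) * u) =
      exp (-u) ^ (L - 1) * exp (2 * u) ^ (j : ℕ) := by
    rw [← exp_nat_mul, ← exp_nat_mul, ← exp_add, Nat.cast_sub k.pos]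
    ring_nf
  simp only [expBasis, sinhCoeffMatrix, Matrix.of_apply, hexp]
  field_simp

lemma expBasisMatrix_mul_sinhCoeffMatrix (y z : Fin L → ℂ) :
    expBasisMatrix y * sinhCoeffMatrix z = Matrix.of fun i k => sinhProdErase z k (y i) := by
  ext i k
  rw [Matrix.mul_apply, Matrix.of_apply, sinhProdErase_eq_sum_expBasis]
  rfl

lemma sinh_sub_eq_mul_exp (a b : ℂ) :
    sinh (a - b) = (exp (2 * a) - exp (2 * b)) * (exp (-b) * exp (-a) * 2⁻¹) := by
  have h1 : exp (2 * a) * (exp (-b) * exp (-a)) = exp (a - b) := by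
    rw [← exp_add, ← exp_add]; ring_nf
  have h2 : exp (2 * b) * (exp (-b) * exp (-a)) = exp (-(a - b)) := by
    rw [← exp_add, ← exp_add]; ring_nf
  rw [sinh]
  linear_combination (h2 - h1) / 2

lemma det_expBasisMatrix (y : Fin L → ℂ) :
    (expBasisMatrix y).det = ∏ i, ∏ j ∈ Ioi i, sinh (y j - y i) := by
  have hentry : expBasisMatrix y = Matrix.of fun i j : Fin L => exp ((1 - L) * y i) *
      Matrix.of (fun i j : Fin L => (2⁻¹ : ℂ) ^ (j : ℕ) *
        Matrix.vandermonde (fun m => exp (2 * y m)) i j) i j := by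
    ext i j
    simp only [expBasisMatrix, Matrix.of_apply]
    rw [expBasis, Matrix.vandermonde_apply,
      ← exp_nat_mul, mul_left_comm, ← exp_add, inv_pow, div_eq_mul_inv]
    ring_nf
  have hpow : ∏ i : Fin L, ∏ _j ∈ Ioi i, (2⁻¹ : ℂ) = ∏ j : Fin L, (2⁻¹ : ℂ) ^ (j : ℕ) := by
    rw [prod_comm' (t' := univ) (s' := Iio) fun i j => by simp]
    simp
  have hexp : (∏ i : Fin L, ∏ _j ∈ Ioi i, exp (-y i)) * ∏ i : Fin L, ∏ j ∈ Ioi i, exp (-y j) =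
      ∏ i, exp ((1 - L) * y i) := by
    simp_rw [← prod_mul_distrib]
    rw [prod_prod_Ioi_mul_eq_prod_prod_off_diag (fun _ i => exp (-y i))]
    refine prod_congr rfl fun i _ => ?_
    rw [prod_const, card_compl, card_singleton, Fintype.card_fin, ← exp_nat_mul,
      Nat.cast_sub i.pos]
    ring_nf
  rw [hentry, Matrix.det_mul_column, Matrix.det_mul_row, Matrix.det_vandermonde]
  simp_rw [sinh_sub_eq_mul_exp, prod_mul_distrib]
  rw [← hexp, hpow]
  ring

lemma sinhProdErase_eq_cosh_mul_of_sinh_eq_zero (z : Fin L → ℂ) {i j : Fin L} (hij : i ≠ j)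
    (h : sinh (z i - z j) = 0) (u : ℂ) :
    sinhProdErase z i u = cosh (z i - z j) * sinhProdErase z j u := by
  have hsinh : sinh (u - z j) = cosh (z i - z j) * sinh (u - z i) := by
    rw [show u - z j = (u - z i) + (z i - z j) by ring, sinh_add, h]
    ring
  rw [sinhProdErase, sinhProdErase, ← mul_prod_erase _ _ (mem_erase.2 ⟨hij.symm, mem_univ j⟩),
    ← mul_prod_erase _ _ (mem_erase.2 ⟨hij, mem_univ i⟩), erase_right_comm, hsinh, mul_assoc]

lemma Matrix.det_eq_zero_of_col_eq_mul {n R : Type*} [Fintype n] [DecidableEq n] [CommRing R]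
    {M : Matrix n n R} {i j : n} (hij : i ≠ j) (c : R) (h : ∀ m, M m i = c * M m j) :
    M.det = 0 := by
  have hM : M = M.updateCol i (c • fun m => M m j) := by
    ext m k
    by_cases hk : k = i
    · subst hk; simp [h]
    · simp [hk]
  rw [hM, det_updateCol_smul, det_updateCol_eq_zero (M := M) hij.symm, mul_zero]

lemma det_sinhCoeffMatrix_of_sinh_ne_zero (z : Fin L → ℂ)
    (hz : ∀ i, ∀ j ∈ Ioi i, sinh (z i - z j) ≠ 0) :
    (sinhCoeffMatrix z).det = ∏ i, ∏ j ∈ Ioi i, sinh (z i - z j) := by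
  have hdiag : expBasisMatrix z * sinhCoeffMatrix z =
      Matrix.diagonal fun k => sinhProdErase z k (z k) := by
    rw [expBasisMatrix_mul_sinhCoeffMatrix]
    ext m k
    rcases eq_or_ne m k with rfl | hmk
    · simp
    · rw [Matrix.of_apply, Matrix.diagonal_apply_ne _ hmk]
      exact prod_eq_zero (mem_erase.2 ⟨hmk, mem_univ m⟩) (by simp)
  have hV : (expBasisMatrix z).det ≠ 0 := by
    rw [det_expBasisMatrix]
    refine prod_ne_zero_iff.2 fun i _ => prod_ne_zero_iff.2 fun j hj => ?_
    rw [← neg_sub, sinh_neg, neg_ne_zero]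
    exact hz i j hj
  apply mul_left_cancel₀ hV
  rw [← Matrix.det_mul, hdiag, Matrix.det_diagonal, det_expBasisMatrix, mul_comm]
  simp_rw [← prod_mul_distrib]
  rw [prod_prod_Ioi_mul_eq_prod_prod_off_diag (fun j i => sinh (z i - z j))]
  simp_rw [compl_singleton]
  rfl

lemma det_sinhCoeffMatrix_eq_zero (z : Fin L → ℂ) {i j : Fin L} (hij : i ≠ j)
    (h : sinh (z i - z j) = 0) : (sinhCoeffMatrix z).det = 0 := by
  set y : Fin L → ℂ := fun m => ((m : ℕ) : ℂ)
  have hV : (expBasisMatrix y).det ≠ 0 := by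
    rw [det_expBasisMatrix]
    refine prod_ne_zero_iff.2 fun a _ => prod_ne_zero_iff.2 fun b hb => ?_
    have hab : (0 : ℝ) < (b : ℕ) - (a : ℕ) := sub_pos.2 (by exact_mod_cast mem_Ioi.1 hb)
    have : y b - y a = ((((b : ℕ) - (a : ℕ) : ℝ)) : ℂ) := by simp [y]
    rw [this, ← ofReal_sinh, ofReal_ne_zero]
    exact (Real.sinh_pos_iff.2 hab).ne'
  have hN : (expBasisMatrix y * sinhCoeffMatrix z).det = 0 := by
    rw [expBasisMatrix_mul_sinhCoeffMatrix]
    exact Matrix.det_eq_zero_of_col_eq_mul hij _ fun m =>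
      sinhProdErase_eq_cosh_mul_of_sinh_eq_zero z hij h (y m)
  rw [Matrix.det_mul] at hN
  exact (mul_eq_zero.1 hN).resolve_left hV

lemma det_sinhCoeffMatrix (z : Fin L → ℂ) :
    (sinhCoeffMatrix z).det = ∏ i, ∏ j ∈ Ioi i, sinh (z i - z j) := by
  by_cases hz : ∀ i, ∀ j ∈ Ioi i, sinh (z i - z j) ≠ 0
  · exact det_sinhCoeffMatrix_of_sinh_ne_zero z hz
  · push Not at hz
    obtain ⟨i, j, hj, h⟩ := hz
    rw [det_sinhCoeffMatrix_eq_zero z (mem_Ioi.1 hj).ne h]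
    exact (prod_eq_zero (mem_univ i) (prod_eq_zero hj h)).symm

lemma expBasisDiff_mul_sinhCoeffMatrix (x y w z : Fin L → ℂ) :
    (Matrix.of fun i j => expBasis L j (x i) - w i * expBasis L j (y i)) * sinhCoeffMatrix z =
      Matrix.of fun i k => sinhProdErase z k (x i) - w i * sinhProdErase z k (y i) := by
  ext i k
  simp only [Matrix.mul_apply, Matrix.of_apply, sinhProdErase_eq_sum_expBasis, mul_sum,
    ← sum_sub_distrib]
  exact sum_congr rfl fun j _ => by ring

lemma prod_sinh_mul_izerginEntry (z : Fin L → ℂ) (η u w : ℂ) (k : Fin L)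
    (h1 : ∀ l, sinh (u - z l) ≠ 0) (h2 : sinh (u - z k - η) ≠ 0) :
    (∏ l, sinh (u - z l)) * (1 / sinh (u - z k) -
        w * (∏ l, sinh (u - z l - η) / sinh (u - z l)) / sinh (u - z k - η)) =
      sinhProdErase z k u - w * sinhProdErase z k (u - η) := by
  have hP : ∏ l, sinh (u - z l) = sinh (u - z k) * sinhProdErase z k u :=
    (mul_prod_erase _ _ (mem_univ k)).symm
  have hQ : ∏ l, sinh (u - z l - η) = sinh (u - z k - η) * sinhProdErase z k (u - η) := by
    simp_rw [sub_right_comm u _ η]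
    exact (mul_prod_erase _ _ (mem_univ k)).symm
  have hN : sinhProdErase z k u ≠ 0 := prod_ne_zero_iff.2 fun l _ => h1 l
  rw [prod_div_distrib, hP, hQ]
  field_simp [h1 k]

end

theorem vandermonde_to_izergin (L : ℕ) (η : ℂ) (x z : Fin L → ℂ)
    (f : ℂ → ℂ)
    (h1 : ∀ i l, Complex.sinh (x i - z l) ≠ 0)
    (h2 : ∀ i k, Complex.sinh (x i - z k - η) ≠ 0) :
    Matrix.det (Matrix.of (fun i j : Fin L =>
        Complex.exp ((2 * ((j : ℕ) : ℂ) + 1 - (L : ℂ)) * x i) / 2 ^ (j : ℕ) -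
          f (x i) *
            Complex.exp ((2 * ((j : ℕ) : ℂ) + 1 - (L : ℂ)) * (x i - η)) / 2 ^ (j : ℕ))) *
      (∏ i : Fin L, ∏ j ∈ Finset.Ioi i, Complex.sinh (z i - z j)) =
    (∏ i : Fin L, ∏ l : Fin L, Complex.sinh (x i - z l)) *
      Matrix.det (Matrix.of (fun i k : Fin L =>
        1 / Complex.sinh (x i - z k) -
          f (x i) * (∏ l, Complex.sinh (x i - z l - η) / Complex.sinh (x i - z l)) /
            Complex.sinh (x i - z k - η))) := by
  calc _ = (Matrix.of fun i j => expBasis L j (x i) - f (x i) * expBasis L j (x i - η)).det *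
        (sinhCoeffMatrix z).det := by
        rw [det_sinhCoeffMatrix]
        simp only [expBasis, mul_div_assoc]
    _ = (Matrix.of fun i k =>
          sinhProdErase z k (x i) - f (x i) * sinhProdErase z k (x i - η)).det := by
        rw [← Matrix.det_mul, expBasisDiff_mul_sinhCoeffMatrix]
    _ = _ := by
        rw [← Matrix.det_mul_column]
        congr 1
        ext i k
        exact (prod_sinh_mul_izerginEntry z η (x i) (f (x i)) k (h1 i) (h2 i k)).symm
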